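/- Aggregation lemma for floor randomization: given N IC and IR mechanisms M_1, …, M_N and convex weights γ ∈ [0,1]^N with Σγ_i = 1, let q̃(θ) = Σ_i γ_i q_i(θ) r_i(θ) and let M^T be the floor-randomized transformation of q̃ (with u^T(θ) = ∫_θ^θ̄ q̃(z)dz). Then for every θ, RS_α(θ, M^T) ≥ Σ_i γ_i RS_α(θ, M_i). -/

import Mathlib

open Set Filter MeasureTheory

noncomputable def V (P : ℝ → ℝ) (q : ℝ) : ℝ := ∫ z in (0:ℝ)..q, P z

/-- Incentive compatibility: `q·r` decreasing plus the envelope formula. -/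
def IC (θl θh : ℝ) (r q u : ℝ → ℝ) : Prop :=
  AntitoneOn (fun θ => q θ * r θ) (Set.Icc θl θh) ∧
  ∀ θ ∈ Set.Icc θl θh, u θ = u θh + ∫ z in θ..θh, q z * r z

/-- Individual rationality. -/
def IR (θh : ℝ) (u : ℝ → ℝ) : Prop := 0 ≤ u θh

/-- Feasibility of the operation and quantity rules. -/
def Valid (θl θh qbar : ℝ) (r q : ℝ → ℝ) : Prop :=
  (∀ θ ∈ Set.Icc θl θh, r θ ∈ Set.Icc (0:ℝ) 1) ∧
  ∀ θ ∈ Set.Icc θl θh, q θ ∈ Set.Icc (0:ℝ) qbar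

/-- Regulator's surplus at type θ with welfare weight α. -/
noncomputable def RS (P : ℝ → ℝ) (c α : ℝ) (r q u : ℝ → ℝ) (θ : ℝ) : ℝ :=
  r θ * (V P (q θ) - c - θ * q θ) - (1 - α) * u θ

/-- Floor-randomized mechanism with quantity floor `qhat`. -/
def FloorRandomized (θl θh qhat : ℝ) (r q u : ℝ → ℝ) : Prop :=
  IC θl θh r q u ∧ IR θh u ∧ u θh = 0 ∧
  ∃ T1 T01 T0 : Set ℝ,
    T1 ∪ T01 ∪ T0 = Set.Icc θl θh ∧
    (∀ x ∈ T01, ∀ y ∈ T1, y < x) ∧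
    (∀ x ∈ T0, ∀ y ∈ T01, y < x) ∧
    (∀ x ∈ T0, ∀ y ∈ T1, y < x) ∧
    T1.OrdConnected ∧ T01.OrdConnected ∧ T0.OrdConnected ∧
    (∀ θ ∈ T1, qhat ≤ q θ ∧ r θ = 1) ∧
    (∀ θ ∈ T01, q θ = qhat ∧ r θ ∈ Set.Ioo (0:ℝ) 1) ∧
    (∀ θ ∈ T0, q θ = 0 ∧ r θ = 0)

/-- Quantity rule of the floor-randomized transformation of an effective quantity `qt`. -/
noncomputable def qT (qhat : ℝ) (qt : ℝ → ℝ) (θ : ℝ) : ℝ :=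
  if 0 < qt θ then max (qt θ) qhat else 0

/-- Operation rule of the floor-randomized transformation. -/
noncomputable def rT (qhat : ℝ) (qt : ℝ → ℝ) (θ : ℝ) : ℝ :=
  if 0 < qt θ then min (qt θ / qhat) 1 else 0

/-- Rent of the floor-randomized transformation. -/
noncomputable def uT (θh : ℝ) (qt : ℝ → ℝ) (θ : ℝ) : ℝ := ∫ z in θ..θh, qt z

/-- Mechanism `(r', q', u')` dominates `(r, q, u)`. -/
def Dominates (θl θh : ℝ) (P : ℝ → ℝ) (c α : ℝ) (r' q' u' r q u : ℝ → ℝ) : Prop :=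
  (∀ θ ∈ Set.Icc θl θh, RS P c α r q u θ ≤ RS P c α r' q' u' θ) ∧
  ∃ θ ∈ Set.Icc θl θh, RS P c α r q u θ < RS P c α r' q' u' θ

/-- Undominated IC and IR mechanism. -/
def Undominated (θl θh qbar : ℝ) (P : ℝ → ℝ) (c α : ℝ) (r q u : ℝ → ℝ) : Prop :=
  Valid θl θh qbar r q ∧ IC θl θh r q u ∧ IR θh u ∧
  ¬ ∃ r' q' u', Valid θl θh qbar r' q' ∧ IC θl θh r' q' u' ∧ IR θh u' ∧
      Dominates θl θh P c α r' q' u' r q u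

/-- Left-continuity of the effective quantity `q·r`. -/
def LeftCont (θl θh : ℝ) (r q : ℝ → ℝ) : Prop :=
  ∀ θ ∈ Set.Ioc θl θh,
    Filter.Tendsto (fun z => q z * r z) (nhdsWithin θ (Set.Iio θ)) (nhds (q θ * r θ))

/-- Downward distortion with respect to the efficient quantity rule `qe`. -/
def DD (θl θh : ℝ) (qe q : ℝ → ℝ) : Prop :=
  (∀ θ ∈ Set.Icc θl θh, q θ ≤ qe θ) ∧ q θl = qe θl

/-!
Write `K(a) = V(a) - a P(a) - c`. Since `P` is decreasing, `V` is concave, so at `a = max(q̃(θ), q̂)`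
the surplus `y ↦ V(y) - c - θ y` lies below its tangent line `y ↦ K(a) + (P(a) - θ) y`. The
intercept `K` is increasing and vanishes at `q̂`, so `K(a) ≥ 0`; hence a lottery `r` over `q` and
`0` gets at most the tangent value at the effective quantity `q r`. Averaging over the mechanisms
bounds their mean surplus by the tangent value at `q̃(θ)`, which is exactly what the
floor-randomized mechanism earns. Its rent `∫_θ^θ̄ q̃` is the average of the `u_i(θ) - u_i(θ̄)`,
at most the average rent by IR.
-/

theorem intervalIntegral_le_sub_mul_of_antitoneOn {P : ℝ → ℝ} {a x : ℝ}
    (hP : AntitoneOn P (uIcc a x)) : ∫ z in a..x, P z ≤ (x - a) * P a := by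
  rcases le_total a x with hax | hxa
  · have hle : ∀ z ∈ Icc a x, P z ≤ P a := fun z hz =>
      hP (by simp [hax]) (uIcc_of_le hax ▸ hz) hz.1
    simpa [mul_comm] using intervalIntegral.integral_mono_on hax
      (hP.intervalIntegrable (μ := volume)) intervalIntegrable_const hle
  · have hle : ∀ z ∈ Icc x a, P a ≤ P z := fun z hz =>
      hP (uIcc_of_ge hxa ▸ hz) (by simp [hxa]) hz.2
    have := intervalIntegral.integral_mono_on hxa intervalIntegrable_const
      (hP.intervalIntegrable (μ := volume)).symm hle
    rw [intervalIntegral.integral_symm]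
    simp only [intervalIntegral.integral_const, smul_eq_mul] at this
    linarith

section Concavity

variable {P : ℝ → ℝ} {b a y : ℝ}

theorem V_sub_V_eq_integral (hP : AntitoneOn P (Icc 0 b)) (ha : a ∈ Icc 0 b) (hy : y ∈ Icc 0 b) :
    V P y - V P a = ∫ z in a..y, P z :=
  have h0 : (0 : ℝ) ∈ Icc 0 b := ⟨le_rfl, ha.1.trans ha.2⟩
  intervalIntegral.integral_interval_sub_left
    ((hP.mono (uIcc_subset_Icc h0 hy)).intervalIntegrable)
    ((hP.mono (uIcc_subset_Icc h0 ha)).intervalIntegrable)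

theorem V_le_tangent (hP : AntitoneOn P (Icc 0 b)) (ha : a ∈ Icc 0 b) (hy : y ∈ Icc 0 b) :
    V P y ≤ V P a + P a * (y - a) := by
  have := intervalIntegral_le_sub_mul_of_antitoneOn (hP.mono (uIcc_subset_Icc ha hy))
  linarith [V_sub_V_eq_integral hP ha hy]

theorem V_sub_mul_le_V_sub_mul (hP : AntitoneOn P (Icc 0 b)) (ha : a ∈ Icc 0 b)
    (hy : y ∈ Icc 0 b) (hya : y ≤ a) : V P y - y * P y ≤ V P a - a * P a := by
  have hPa : y * P a ≤ y * P y := mul_le_mul_of_nonneg_left (hP hy ha hya) hy.1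
  linarith [V_le_tangent hP ha hy]

end Concavity

theorem mul_le_of_le_affine {f q r K M : ℝ} (hf : f ≤ K + M * q) (hK : 0 ≤ K)
    (hr0 : 0 ≤ r) (hr1 : r ≤ 1) : r * f ≤ K + M * (q * r) := by
  linarith [mul_le_mul_of_nonneg_left hf hr0, mul_nonneg (sub_nonneg.2 hr1) hK]

theorem Finset.sum_mul_le_affine {ι : Type*} {s : Finset ι} {γ g x : ι → ℝ} {K M : ℝ}
    (hγ0 : ∀ i ∈ s, 0 ≤ γ i) (hγ1 : ∑ i ∈ s, γ i = 1) (h : ∀ i ∈ s, g i ≤ K + M * x i) :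
    ∑ i ∈ s, γ i * g i ≤ K + M * ∑ i ∈ s, γ i * x i :=
  calc ∑ i ∈ s, γ i * g i ≤ ∑ i ∈ s, (K * γ i + M * (γ i * x i)) :=
        Finset.sum_le_sum fun i hi => by linarith [mul_le_mul_of_nonneg_left (h i hi) (hγ0 i hi)]
    _ = K + M * ∑ i ∈ s, γ i * x i := by
        rw [Finset.sum_add_distrib, ← Finset.mul_sum, ← Finset.mul_sum, hγ1, mul_one]

theorem Valid.mul_mem_Icc {θl θh qbar θ : ℝ} {r q : ℝ → ℝ} (h : Valid θl θh qbar r q)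
    (hθ : θ ∈ Icc θl θh) : q θ * r θ ∈ Icc 0 qbar := by
  obtain ⟨hr0, hr1⟩ := h.1 θ hθ
  obtain ⟨hq0, hqb⟩ := h.2 θ hθ
  exact ⟨mul_nonneg hq0 hr0, by nlinarith⟩

theorem IC.integral_eq {θl θh θ : ℝ} {r q u : ℝ → ℝ} (h : IC θl θh r q u)
    (hθ : θ ∈ Icc θl θh) : ∫ z in θ..θh, q z * r z = u θ - u θh := by
  linarith [h.2 θ hθ]

theorem IC.intervalIntegrable {θl θh θ : ℝ} {r q u : ℝ → ℝ} (h : IC θl θh r q u)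
    (hθ : θ ∈ Icc θl θh) : IntervalIntegrable (fun z => q z * r z) volume θ θh :=
  (h.1.mono (by rw [uIcc_of_le hθ.2]; exact Icc_subset_Icc_left hθ.1)).intervalIntegrable

theorem uT_sum_le {θl θh θ : ℝ} {ι : Type*} {s : Finset ι} {γ : ι → ℝ} {r q u : ι → ℝ → ℝ}
    (hγ0 : ∀ i ∈ s, 0 ≤ γ i) (hIC : ∀ i ∈ s, IC θl θh (r i) (q i) (u i))
    (hIR : ∀ i ∈ s, IR θh (u i)) (hθ : θ ∈ Icc θl θh) :
    uT θh (fun z => ∑ i ∈ s, γ i * (q i z * r i z)) θ ≤ ∑ i ∈ s, γ i * u i θ := by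
  rw [uT, intervalIntegral.integral_finsetSum
    fun i hi => ((hIC i hi).intervalIntegrable hθ).const_mul (γ i)]
  refine Finset.sum_le_sum fun i hi => ?_
  rw [intervalIntegral.integral_const_mul, (hIC i hi).integral_eq hθ]
  have hIRi : 0 ≤ u i θh := hIR i hi
  exact mul_le_mul_of_nonneg_left (by linarith) (hγ0 i hi)

/-- The floor-randomized mechanism earns the tangent value at `max (qt θ) qhat`, taken at `qt θ`. -/
theorem rT_mul_surplus_qT {P : ℝ → ℝ} {c θ qhat : ℝ} {qt : ℝ → ℝ} (hqhat : 0 < qhat)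
    (hqt : 0 ≤ qt θ) (hc : V P qhat - qhat * P qhat = c) :
    rT qhat qt θ * (V P (qT qhat qt θ) - c - θ * qT qhat qt θ) =
      (V P (max (qt θ) qhat) - max (qt θ) qhat * P (max (qt θ) qhat) - c)
        + (P (max (qt θ) qhat) - θ) * qt θ := by
  rcases le_or_gt qhat (qt θ) with hge | hlt
  · have hmin : min (qt θ / qhat) 1 = 1 := min_eq_right ((one_le_div hqhat).2 hge)
    simp only [rT, qT, if_pos (hqhat.trans_le hge), max_eq_left hge, hmin]
    ring
  · rw [max_eq_right hlt.le]
    rcases hqt.eq_or_lt with h0 | hpos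
    · simp [rT, ← h0, hc]
    · have hmin : min (qt θ / qhat) 1 = qt θ / qhat := min_eq_left ((div_le_one hqhat).2 hlt.le)
      simp only [rT, qT, if_pos hpos, max_eq_right hlt.le, hmin, ← hc]
      field_simp
      ring

theorem stmt19_general (θl θh qbar c α qhat : ℝ) (P : ℝ → ℝ)
    (N : ℕ)
    (r q u : Fin N → ℝ → ℝ) (γ : Fin N → ℝ)
    (hα1 : α < 1)
    (hPanti : StrictAntiOn P (Icc 0 qbar))
    (hqhat_mem : qhat ∈ Ioo 0 qbar)
    (hqhat_eq : V P qhat - qhat * P qhat = c)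
    (hγ : ∀ i, γ i ∈ Icc (0:ℝ) 1) (hγsum : ∑ i, γ i = 1)
    (hvalid : ∀ i, Valid θl θh qbar (r i) (q i))
    (hIC : ∀ i, IC θl θh (r i) (q i) (u i))
    (hIR : ∀ i, IR θh (u i)) :
    ∀ θ ∈ Icc θl θh,
      RS P c α (rT qhat (fun z => ∑ i, γ i * (q i z * r i z)))
          (qT qhat (fun z => ∑ i, γ i * (q i z * r i z)))
          (uT θh (fun z => ∑ i, γ i * (q i z * r i z))) θ
        ≥ ∑ i, γ i * RS P c α (r i) (q i) (u i) θ := by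
  intro θ hθ
  have hP := hPanti.antitoneOn
  have hγ0 : ∀ i ∈ Finset.univ, 0 ≤ γ i := fun i _ => (hγ i).1
  have hqt : ∑ i, γ i * (q i θ * r i θ) ∈ Icc 0 qbar :=
    (convex_Icc 0 qbar).sum_mem hγ0 hγsum fun i _ => (hvalid i).mul_mem_Icc hθ
  have hRT := rT_mul_surplus_qT (P := P) (θ := θ)
    (qt := fun z => ∑ i, γ i * (q i z * r i z)) hqhat_mem.1 hqt.1 hqhat_eq
  set a := max (∑ i, γ i * (q i θ * r i θ)) qhat
  have hqhat : qhat ∈ Icc 0 qbar := Ioo_subset_Icc_self hqhat_mem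
  have ha : a ∈ Icc 0 qbar := ⟨hqhat.1.trans (le_max_right _ _), max_le hqt.2 hqhat.2⟩
  have hK : 0 ≤ V P a - a * P a - c :=
    hqhat_eq ▸ sub_nonneg.2 (V_sub_mul_le_V_sub_mul hP ha hqhat (le_max_right _ _))
  have hsurplus : ∑ i, γ i * (r i θ * (V P (q i θ) - c - θ * q i θ))
      ≤ (V P a - a * P a - c) + (P a - θ) * ∑ i, γ i * (q i θ * r i θ) :=
    Finset.sum_mul_le_affine hγ0 hγsum fun i _ =>
      have hq := (hvalid i).2 θ hθ
      mul_le_of_le_affine (by linarith [V_le_tangent hP ha hq]) hK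
        ((hvalid i).1 θ hθ).1 ((hvalid i).1 θ hθ).2
  have hrent := uT_sum_le hγ0 (fun i _ => hIC i) (fun i _ => hIR i) hθ
  have hmix : ∑ i, γ i * RS P c α (r i) (q i) (u i) θ
      = ∑ i, γ i * (r i θ * (V P (q i θ) - c - θ * q i θ)) - (1 - α) * ∑ i, γ i * u i θ := by
    rw [Finset.mul_sum, ← Finset.sum_sub_distrib]
    exact Finset.sum_congr rfl fun i _ => by rw [RS]; ring
  rw [ge_iff_le, hmix, RS, hRT]
  linarith [mul_le_mul_of_nonneg_left hrent (sub_nonneg.2 hα1.le)]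

theorem stmt19 (θl θh qbar c α qhat : ℝ) (P : ℝ → ℝ)
    (N : ℕ) (hN : 0 < N)
    (r q u : Fin N → ℝ → ℝ) (γ : Fin N → ℝ)
    (h0 : 0 < θl) (hlt : θl < θh) (hqbar : 0 < qbar) (hc : 0 < c)
    (hα0 : 0 ≤ α) (hα1 : α < 1)
    (hPcont : ContinuousOn P (Icc 0 qbar))
    (hPanti : StrictAntiOn P (Icc 0 qbar))
    (hPqbar : P qbar = 0)
    (hqhat_mem : qhat ∈ Ioo 0 qbar)
    (hqhat_eq : V P qhat - qhat * P qhat = c)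
    (hγ : ∀ i, γ i ∈ Icc (0:ℝ) 1) (hγsum : ∑ i, γ i = 1)
    (hvalid : ∀ i, Valid θl θh qbar (r i) (q i))
    (hIC : ∀ i, IC θl θh (r i) (q i) (u i))
    (hIR : ∀ i, IR θh (u i)) :
    ∀ θ ∈ Icc θl θh,
      RS P c α (rT qhat (fun z => ∑ i, γ i * (q i z * r i z)))
          (qT qhat (fun z => ∑ i, γ i * (q i z * r i z)))
          (uT θh (fun z => ∑ i, γ i * (q i z * r i z))) θ
        ≥ ∑ i, γ i * RS P c α (r i) (q i) (u i) θ :=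
  stmt19_general θl θh qbar c α qhat P N r q u γ hα1 hPanti hqhat_mem hqhat_eq hγ hγsum hvalid hIC
    hIR
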